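/- arXiv:math/0612675 — 2 statements merged into one kernel-verified Lean document; each statement's English description precedes it below -/
import Mathlib

section
/- Let $A$ be a symmetric nonnegative weight matrix with zero diagonal, $0<\alpha<1$, and define $B=[b_{ij}]$ with $b_{ij}=a_{ij}^{\frac{2}{1+\alpha}}$. For $\delta\in\mathbb{R}^n$ with $\mathbf{1}^T\delta=0$, one has $\tfrac12\sum_{i,j=1}^n a_{ij}|\delta_j-\delta_i|^{1+\alpha} \ge \tfrac12\left(2\lambda_2(L_B)\,\delta^T\delta\right)^{\frac{1+\alpha}{2}}$, where $\lambda_2(L_B)$ is the second smallest eigenvalue of the Laplacian of $B$. -/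
open Finset Matrix

lemma add_rpow_le {x y p : ℝ} (hx : 0 ≤ x) (hy : 0 ≤ y) (hp : 0 ≤ p) (hp1 : p ≤ 1) :
    (x + y) ^ p ≤ x ^ p + y ^ p := by
  have h := NNReal.rpow_add_le_add_rpow x.toNNReal y.toNNReal hp hp1
  have := (NNReal.coe_le_coe).2 h
  push_cast [NNReal.coe_rpow] at this
  rwa [Real.coe_toNNReal x hx, Real.coe_toNNReal y hy] at this

lemma sum_rpow_le {ι : Type*} [DecidableEq ι] {s : Finset ι} {f : ι → ℝ} (hf : ∀ i ∈ s, 0 ≤ f i)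
    {p : ℝ} (hp : 0 < p) (hp1 : p ≤ 1) :
    (∑ i ∈ s, f i) ^ p ≤ ∑ i ∈ s, f i ^ p := by
  induction s using Finset.induction with
  | empty => simp [Real.zero_rpow hp.ne']
  | @insert a s ha ih =>
    rw [Finset.sum_insert ha, Finset.sum_insert ha]
    have h1 : 0 ≤ f a := hf a (mem_insert_self _ _)
    have h2 : 0 ≤ ∑ i ∈ s, f i := Finset.sum_nonneg fun i hi => hf i (mem_insert_of_mem hi)
    calc (f a + ∑ i ∈ s, f i) ^ p ≤ f a ^ p + (∑ i ∈ s, f i) ^ p :=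
          add_rpow_le h1 h2 hp.le hp1
      _ ≤ f a ^ p + ∑ i ∈ s, f i ^ p := by
          gcongr
          exact ih fun i hi => hf i (mem_insert_of_mem hi)

def graphLaplacian {n : ℕ} (A : Matrix (Fin n) (Fin n) ℝ) : Matrix (Fin n) (Fin n) ℝ :=
  fun i j => if i = j then ∑ k ∈ univ.erase i, A i k else -A i j

def WeightConnected {n : ℕ} (A : Matrix (Fin n) (Fin n) ℝ) : Prop :=
  ∀ i j : Fin n, Relation.ReflTransGen (fun a b => 0 < A a b) i j

theorem dissipation_lower_bound {n : ℕ} (hn : 2 ≤ n) (A : Matrix (Fin n) (Fin n) ℝ)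
    (hsymm : A.IsSymm) (hnonneg : ∀ i j, 0 ≤ A i j) (hdiag : ∀ i, A i i = 0)
    (hconn : WeightConnected A)
    (α : ℝ) (hα0 : 0 < α) (hα1 : α < 1)
    (B : Matrix (Fin n) (Fin n) ℝ) (hB : ∀ i j, B i j = A i j ^ (2 / (1 + α)))
    -- `μ` lists the eigenvalues of the Laplacian of `B` in increasing order:
    (μ : Fin n → ℝ) (T : Matrix (Fin n) (Fin n) ℝ)
    (hT : Tᵀ * T = 1)
    (hdiagz : graphLaplacian B = Tᵀ * Matrix.diagonal μ * T)
    (hmono : Monotone μ)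
    (hμ0 : μ ⟨0, by omega⟩ = 0)
    (hmu2 : 0 < μ ⟨1, by omega⟩)
    (δ : Fin n → ℝ) (hδ : ∑ i, δ i = 0) :
    (1 / 2) * (2 * μ ⟨1, by omega⟩ * (δ ⬝ᵥ δ)) ^ ((1 + α) / 2) ≤
      (1 / 2) * ∑ i, ∑ j, A i j * |δ j - δ i| ^ (1 + α) := by
  have h1α : (0:ℝ) < 1 + α := by linarith
  set p : ℝ := (1 + α) / 2 with hp_def
  have hp : 0 < p := by positivity
  have hp1 : p ≤ 1 := by rw [hp_def]; linarith
  -- basic facts about B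
  have hBnn : ∀ i j, 0 ≤ B i j := fun i j => by
    rw [hB]; exact Real.rpow_nonneg (hnonneg i j) _
  have hBsymm : ∀ i j, B i j = B j i := fun i j => by
    rw [hB, hB, hsymm.apply]
  have hBdiag : ∀ i, B i i = 0 := fun i => by
    rw [hB, hdiag, Real.zero_rpow]; positivity
  set L := graphLaplacian B with hL
  set v : Fin n → ℝ := T *ᵥ δ with hv
  set w : Fin n → ℝ := T *ᵥ (fun _ => (1:ℝ)) with hw
  have hTT : T * Tᵀ = 1 := mul_eq_one_comm.mp hT
  -- quadratic form via spectral decomposition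
  have hQspec : δ ⬝ᵥ (L *ᵥ δ) = ∑ k, μ k * v k ^ 2 := by
    rw [hdiagz, ← Matrix.mulVec_mulVec, Matrix.dotProduct_mulVec, ← Matrix.vecMul_vecMul,
      Matrix.vecMul_transpose]
    simp only [dotProduct, Matrix.vecMul_diagonal, hv]
    exact Finset.sum_congr rfl fun k _ => by ring
  have hdd : δ ⬝ᵥ δ = ∑ k, v k ^ 2 := by
    have : δ ⬝ᵥ δ = δ ⬝ᵥ ((Tᵀ * T) *ᵥ δ) := by rw [hT, Matrix.one_mulVec]
    rw [this, ← Matrix.mulVec_mulVec, Matrix.dotProduct_mulVec, Matrix.vecMul_transpose]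
    simp [dotProduct, hv, sq]
  -- L annihilates the ones vector
  have hLones : L *ᵥ (fun _ => (1:ℝ)) = 0 := by
    funext i
    simp only [Matrix.mulVec, dotProduct, mul_one, Pi.zero_apply]
    rw [← Finset.add_sum_erase _ _ (mem_univ i)]
    have h1 : L i i = ∑ k ∈ univ.erase i, B i k := by simp [hL, graphLaplacian]
    have h2 : ∑ j ∈ univ.erase i, L i j = ∑ j ∈ univ.erase i, -B i j :=
      Finset.sum_congr rfl fun j hj => by
        simp [hL, graphLaplacian, (Finset.ne_of_mem_erase hj).symm]
    rw [h1, h2, ← Finset.sum_add_distrib]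
    simp
  have hDw : ∀ k, μ k * w k = 0 := by
    have h0 : Tᵀ *ᵥ (Matrix.diagonal μ *ᵥ w) = 0 := by
      rw [hv] at *
      have := hLones
      rw [hdiagz] at this
      rw [← Matrix.mulVec_mulVec, ← Matrix.mulVec_mulVec] at this
      exact this
    have h1 : Matrix.diagonal μ *ᵥ w = 0 := by
      have := congrArg (fun x => T *ᵥ x) h0
      simpa [Matrix.mulVec_mulVec, ← Matrix.mul_assoc, hTT, Matrix.one_mulVec, Matrix.mulVec_zero] using this
    intro k
    have := congrFun h1 k
    simpa [Matrix.mulVec_diagonal] using this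
  have hμpos : ∀ k : Fin n, k ≠ ⟨0, by omega⟩ → 0 < μ k := by
    intro k hk
    have hk1 : (⟨1, by omega⟩ : Fin n) ≤ k := by
      have : 1 ≤ k.val := by
        rcases Nat.eq_zero_or_pos k.val with h | h
        · exact absurd (Fin.ext h) hk
        · exact h
      exact this
    exact lt_of_lt_of_le hmu2 (hmono hk1)
  have hwk : ∀ k : Fin n, k ≠ ⟨0, by omega⟩ → w k = 0 := by
    intro k hk
    have := hDw k
    rcases mul_eq_zero.mp this with h | h
    · exact absurd h (hμpos k hk).ne'
    · exact h
  -- w ⬝ᵥ v = 0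
  have hwv : ∑ k, w k * v k = 0 := by
    have : (fun _ => (1:ℝ)) ⬝ᵥ δ = (fun _ => (1:ℝ)) ⬝ᵥ ((Tᵀ * T) *ᵥ δ) := by
      rw [hT, Matrix.one_mulVec]
    rw [← Matrix.mulVec_mulVec, Matrix.dotProduct_mulVec, Matrix.vecMul_transpose] at this
    have h2 : (fun _ => (1:ℝ)) ⬝ᵥ δ = 0 := by simpa [dotProduct] using hδ
    rw [h2] at this
    simpa [dotProduct, hv, hw] using this.symm
  have hww : ∑ k, w k ^ 2 = n := by
    have : ((fun _ => (1:ℝ)) : Fin n → ℝ) ⬝ᵥ (fun _ => (1:ℝ)) = ((fun _ => (1:ℝ)) : Fin n → ℝ) ⬝ᵥ ((Tᵀ * T) *ᵥ (fun _ => (1:ℝ))) := by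
      rw [hT, Matrix.one_mulVec]
    rw [← Matrix.mulVec_mulVec, Matrix.dotProduct_mulVec, Matrix.vecMul_transpose] at this
    have h2 : ((fun _ => (1:ℝ)) : Fin n → ℝ) ⬝ᵥ (fun _ => (1:ℝ)) = (n:ℝ) := by simp [dotProduct]
    rw [h2] at this
    have : (n:ℝ) = ∑ k, w k * w k := by simpa [dotProduct, hw] using this
    rw [this]; exact Finset.sum_congr rfl fun k _ => sq (w k)
  have hv0 : v ⟨0, by omega⟩ = 0 := by
    have hsum : ∑ k, w k * v k = w ⟨0, by omega⟩ * v ⟨0, by omega⟩ := by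
      rw [← Finset.add_sum_erase _ _ (mem_univ (⟨0, by omega⟩ : Fin n))]
      have : ∑ k ∈ univ.erase (⟨0, by omega⟩ : Fin n), w k * v k = 0 :=
        Finset.sum_eq_zero fun k hk => by
          rw [hwk k (Finset.ne_of_mem_erase hk), zero_mul]
      rw [this, add_zero]
    have hw0 : w ⟨0, by omega⟩ ≠ 0 := by
      intro h
      have : ∑ k, w k ^ 2 = 0 := Finset.sum_eq_zero fun k _ => by
        by_cases hk : k = ⟨0, by omega⟩
        · rw [hk, h]; ring
        · rw [hwk k hk]; ring
      rw [hww] at this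
      have hn0 : (0:ℝ) < n := by exact_mod_cast (by omega : 0 < n)
      linarith
    have := hwv
    rw [hsum] at this
    exact (mul_eq_zero.mp this).resolve_left hw0
  -- Fiedler bound
  have hfiedler : μ ⟨1, by omega⟩ * (δ ⬝ᵥ δ) ≤ δ ⬝ᵥ (L *ᵥ δ) := by
    rw [hQspec, hdd, Finset.mul_sum]
    apply Finset.sum_le_sum
    intro k _
    by_cases hk : k = ⟨0, by omega⟩
    · rw [hk, hv0]; simp
    · have h1 : μ ⟨1, by omega⟩ ≤ μ k := by
        apply hmono
        show (1:ℕ) ≤ k.val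
        rcases Nat.eq_zero_or_pos k.val with h | h
        · exact absurd (Fin.ext h) hk
        · exact h
      have := sq_nonneg (v k)
      nlinarith
  -- quadratic form as a double sum
  have hQsum : ∑ i, ∑ j, B i j * (δ j - δ i) ^ 2 = 2 * (δ ⬝ᵥ (L *ᵥ δ)) := by
    have hQ : δ ⬝ᵥ (L *ᵥ δ) = ∑ i, ∑ j, (B i j * δ i ^ 2 - B i j * δ i * δ j) := by
      simp only [dotProduct, Matrix.mulVec]
      apply Finset.sum_congr rfl
      intro i _
      have hrow : ∑ j, L i j * δ j = ∑ j, B i j * (δ i - δ j) := by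
        rw [← Finset.add_sum_erase _ (fun j => L i j * δ j) (mem_univ i),
            ← Finset.add_sum_erase _ (fun j => B i j * (δ i - δ j)) (mem_univ i)]
        have hd : B i i * (δ i - δ i) = 0 := by ring
        rw [hd, zero_add]
        have h1 : L i i * δ i = ∑ j ∈ univ.erase i, B i j * δ i := by
          have h0 : L i i = ∑ j ∈ univ.erase i, B i j := by simp [hL, graphLaplacian]
          rw [h0, Finset.sum_mul]
        have h2 : ∑ j ∈ univ.erase i, L i j * δ j = ∑ j ∈ univ.erase i, -(B i j * δ j) :=
          Finset.sum_congr rfl fun j hj => by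
            simp [hL, graphLaplacian, (Finset.ne_of_mem_erase hj).symm]
        rw [h1, h2, ← Finset.sum_add_distrib]
        exact Finset.sum_congr rfl fun j _ => by ring
      rw [hrow, Finset.mul_sum]
      apply Finset.sum_congr rfl
      intro j _
      ring
    have hswap : ∑ i, ∑ j, B i j * δ j ^ 2 = ∑ i, ∑ j, B i j * δ i ^ 2 := by
      rw [Finset.sum_comm]
      apply Finset.sum_congr rfl; intro i _
      apply Finset.sum_congr rfl; intro j _
      rw [hBsymm j i]
    have hexp : ∀ i j, B i j * (δ j - δ i) ^ 2 =
        B i j * δ j ^ 2 + B i j * δ i ^ 2 - 2 * (B i j * δ i * δ j) := fun i j => by ring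
    simp only [hexp]
    rw [hQ]
    simp only [Finset.sum_sub_distrib, Finset.sum_add_distrib, ← Finset.mul_sum, hswap]
    ring
  -- per-term identity
  have hterm : ∀ i j, (B i j * (δ j - δ i) ^ 2) ^ p = A i j * |δ j - δ i| ^ (1 + α) := by
    intro i j
    rw [Real.mul_rpow (hBnn i j) (sq_nonneg _)]
    congr 1
    · rw [hB, ← Real.rpow_mul (hnonneg i j)]
      have he : 2 / (1 + α) * p = 1 := by
        rw [hp_def]; field_simp
      rw [he, Real.rpow_one]
    · have h2p : ((2:ℕ):ℝ) * p = 1 + α := by push_cast; rw [hp_def]; ring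
      rw [← sq_abs, ← Real.rpow_natCast |δ j - δ i| 2, ← Real.rpow_mul (abs_nonneg _), h2p]
  -- main chain
  have hlhs_nn : 0 ≤ 2 * μ ⟨1, by omega⟩ * (δ ⬝ᵥ δ) := by
    have : 0 ≤ δ ⬝ᵥ δ := by
      simp only [dotProduct]
      exact Finset.sum_nonneg fun i _ => mul_self_nonneg _
    positivity
  have hstep1 : (2 * μ ⟨1, by omega⟩ * (δ ⬝ᵥ δ)) ^ p ≤
      (∑ i, ∑ j, B i j * (δ j - δ i) ^ 2) ^ p := by
    apply Real.rpow_le_rpow hlhs_nn _ hp.le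
    rw [hQsum]
    nlinarith [hfiedler]
  have hstep2 : (∑ i, ∑ j, B i j * (δ j - δ i) ^ 2) ^ p ≤
      ∑ i, ∑ j, (B i j * (δ j - δ i) ^ 2) ^ p := by
    calc (∑ i, ∑ j, B i j * (δ j - δ i) ^ 2) ^ p
        ≤ ∑ i, (∑ j, B i j * (δ j - δ i) ^ 2) ^ p := by
          apply sum_rpow_le _ hp hp1
          intro i _
          exact Finset.sum_nonneg fun j _ => mul_nonneg (hBnn i j) (sq_nonneg _)
      _ ≤ ∑ i, ∑ j, (B i j * (δ j - δ i) ^ 2) ^ p := by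
          apply Finset.sum_le_sum
          intro i _
          apply sum_rpow_le _ hp hp1
          intro j _
          exact mul_nonneg (hBnn i j) (sq_nonneg _)
  have hfinal : (2 * μ ⟨1, by omega⟩ * (δ ⬝ᵥ δ)) ^ p ≤
      ∑ i, ∑ j, A i j * |δ j - δ i| ^ (1 + α) := by
    calc (2 * μ ⟨1, by omega⟩ * (δ ⬝ᵥ δ)) ^ p
        ≤ ∑ i, ∑ j, (B i j * (δ j - δ i) ^ 2) ^ p := le_trans hstep1 hstep2
      _ = ∑ i, ∑ j, A i j * |δ j - δ i| ^ (1 + α) := by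
          apply Finset.sum_congr rfl; intro i _
          apply Finset.sum_congr rfl; intro j _
          exact hterm i j
  linarith
end

section
/- Let $A$ be a symmetric nonnegative weight matrix with zero diagonal and connected graph, and let $y\in\mathbb{R}^n$ satisfy $\sum_{j\ne i} a_{ij}\,\mathrm{sign}(y_j-y_i)|y_j-y_i|^{\alpha}=0$ for all $i=1,\dots,n$, where $0<\alpha<1$. Then $y_1=y_2=\dots=y_n$, i.e., $y\in\mathrm{span}(\mathbf{1})$. -/
open Finset

theorem equilibrium_protocol_two {n : ℕ} (A : Matrix (Fin n) (Fin n) ℝ)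
    (hsymm : A.IsSymm) (hnonneg : ∀ i j, 0 ≤ A i j) (hdiag : ∀ i, A i i = 0)
    (hconn : WeightConnected A)
    (α : ℝ) (hα0 : 0 < α) (hα1 : α < 1) (y : Fin n → ℝ)
    (heq : ∀ i, ∑ j ∈ univ.erase i, A i j * Real.sign (y j - y i) * |y j - y i| ^ α = 0) :
    ∃ c : ℝ, y = fun _ => c := by
  rcases Nat.eq_zero_or_pos n with hn | hn
  · subst hn; exact ⟨0, funext fun i => i.elim0⟩
  have hne : (univ : Finset (Fin n)).Nonempty := ⟨⟨0, hn⟩, mem_univ _⟩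
  obtain ⟨i0, -, hmin⟩ := Finset.exists_min_image univ y hne
  have key : ∀ i, y i = y i0 → ∀ j, 0 < A i j → y j = y i0 := by
    intro i hi j hAij
    have hterm : ∀ k ∈ univ.erase i,
        0 ≤ A i k * Real.sign (y k - y i) * |y k - y i| ^ α := by
      intro k _
      have h1 : 0 ≤ y k - y i := by
        have := hmin k (mem_univ k); rw [hi]; linarith
      have hs : 0 ≤ Real.sign (y k - y i) := by
        rcases eq_or_lt_of_le h1 with h | h
        · rw [← h, Real.sign_zero]
        · rw [Real.sign_of_pos h]; norm_num
      exact mul_nonneg (mul_nonneg (hnonneg i k) hs) (Real.rpow_nonneg (abs_nonneg _) α)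
    have hzero := (Finset.sum_eq_zero_iff_of_nonneg hterm).mp (heq i)
    have hjmem : j ∈ univ.erase i := by
      refine mem_erase.mpr ⟨?_, mem_univ j⟩
      intro h; subst h; rw [hdiag] at hAij; exact lt_irrefl 0 hAij
    have hj := hzero j hjmem
    by_contra hne'
    have hgt : 0 < y j - y i := by
      have h2 := hmin j (mem_univ j)
      rw [hi]
      rcases eq_or_lt_of_le h2 with h | h
      · exact absurd h.symm hne'
      · linarith
    rw [Real.sign_of_pos hgt] at hj
    have hpos : 0 < |y j - y i| ^ α :=
      Real.rpow_pos_of_pos (abs_pos.mpr (ne_of_gt hgt)) α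
    nlinarith
  have hall : ∀ j, y j = y i0 := by
    intro j
    induction hconn i0 j with
    | refl => rfl
    | tail hpath hstep ih => exact key _ ih _ hstep
  exact ⟨y i0, funext hall⟩
end
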